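/- arXiv:2304.10385 — 3 statements merged into one kernel-verified Lean document; each statement's English description precedes it below -/
import Mathlib

section
/- Let ψ₀, ψ₁ be unit vectors in a finite-dimensional complex inner product space encoded in registers of dimension 2^n, and consider the swap test: the state (|0⟩⊗ψ₀⊗ψ₁) is evolved by H on the ancilla, a controlled-SWAP of the two registers, and H again on the ancilla. Then the probability of measuring the ancilla in |0⟩ equals 1/2 + (1/2)·|⟨ψ₀|ψ₁⟩|². -/
open Finset ComplexConjugate

/-!
Up to the factor `1/2`, the ancilla-`|0⟩` amplitude is the symmetrisation
`u j * v l + u l * v j` of the product state. Expanding `‖a + b‖²`, the two squared terms each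
contribute `‖u‖² ‖v‖²`, and the cross terms factor as `conj ⟨u|v⟩ * ⟨u|v⟩ = |⟨u|v⟩|²`.
-/

section SymmetricTensor

variable {ι : Type*} [Fintype ι]

lemma Complex.norm_add_sq_eq (a b : ℂ) :
    ‖a + b‖ ^ 2 = ‖a‖ ^ 2 + ‖b‖ ^ 2 + 2 * (a * conj b).re := by
  simp only [← Complex.normSq_eq_norm_sq, Complex.normSq_add]

lemma sum_sum_norm_mul_sq (u v : ι → ℂ) :
    ∑ j, ∑ l, ‖u j * v l‖ ^ 2 = (∑ j, ‖u j‖ ^ 2) * ∑ l, ‖v l‖ ^ 2 := by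
  simp only [norm_mul, mul_pow, sum_mul_sum]

lemma sum_sum_mul_conj_swap (u v : ι → ℂ) :
    ∑ j, ∑ l, u j * v l * conj (u l * v j) = (‖∑ j, conj (u j) * v j‖ ^ 2 : ℝ) := by
  rw [Complex.ofReal_pow, ← Complex.conj_mul', map_sum, sum_mul_sum]
  refine sum_congr rfl fun j _ => sum_congr rfl fun l _ => ?_
  simp only [map_mul, Complex.conj_conj]
  ring

theorem sum_sum_norm_mul_add_mul_swap_sq (u v : ι → ℂ) :
    ∑ j, ∑ l, ‖u j * v l + u l * v j‖ ^ 2 =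
      2 * ((∑ j, ‖u j‖ ^ 2) * ∑ j, ‖v j‖ ^ 2) + 2 * ‖∑ j, conj (u j) * v j‖ ^ 2 := by
  have cross : ∑ j, ∑ l, (u j * v l * conj (u l * v j)).re = ‖∑ j, conj (u j) * v j‖ ^ 2 := by
    simpa only [Complex.re_sum, Complex.ofReal_re] using
      congrArg Complex.re (sum_sum_mul_conj_swap u v)
  have swapped : ∑ j, ∑ l, ‖u l * v j‖ ^ 2 = ∑ j, ∑ l, ‖u j * v l‖ ^ 2 := sum_comm
  simp only [Complex.norm_add_sq_eq, sum_add_distrib, ← mul_sum, swapped, cross,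
    sum_sum_norm_mul_sq]
  ring

end SymmetricTensor

/-- Swap test: for unit state vectors `ψ₀, ψ₁` on a register of dimension `2^n`,
the amplitude of the full state after `H`, controlled-SWAP, `H` on the component
where the ancilla is `|0⟩` is `(1/2)(ψ₀ j * ψ₁ l + ψ₀ l * ψ₁ j)` at `(j, l)`,
and the probability of measuring the ancilla in `|0⟩` equals
`1/2 + (1/2)|⟨ψ₀|ψ₁⟩|²`. -/
theorem swap_test_probability
    (n : ℕ) (ψ₀ ψ₁ : Fin (2 ^ n) → ℂ)
    (h₀ : ∑ j, ‖ψ₀ j‖ ^ 2 = 1) (h₁ : ∑ j, ‖ψ₁ j‖ ^ 2 = 1) :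
    ∑ j, ∑ l, ‖(1 / 2 : ℂ) * (ψ₀ j * ψ₁ l + ψ₀ l * ψ₁ j)‖ ^ 2 =
      1 / 2 + 1 / 2 * ‖∑ j, (starRingEnd ℂ) (ψ₀ j) * ψ₁ j‖ ^ 2 := by
  simp only [norm_mul, mul_pow, ← mul_sum]
  rw [sum_sum_norm_mul_add_mul_swap_sq, h₀, h₁]
  norm_num
  ring
end

section
/- Let D⁰, D¹ : Fin N → ℝ be unit vectors and suppose they are encoded in BOE states |ψ̃⁰⟩ = ∑_j D⁰_j |j⟩|φ⁰_j⟩ and |ψ̃¹⟩ = ∑_j D¹_j |j⟩|φ¹_j⟩ where {|φ⁰_j⟩}_j and {|φ¹_j⟩}_j are each orthonormal families in the auxiliary space. Applying the swap test between the primary registers only, the ancilla is measured in |0⟩ with probability 1/2 + (1/2)·∑_j (D⁰_j)²·(D¹_j)². -/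
/-!
Let `Ψ = ψ⁰ ⊗ ψ¹` and let `SΨ` be `Ψ` with the primary registers exchanged. The ancilla-`|0⟩`
amplitude is `(Ψ + SΨ)/2`, so the probability is `(‖Ψ‖² + ‖SΨ‖²)/4 + Re⟨SΨ, Ψ⟩/2 = 1/2 + Re⟨SΨ, Ψ⟩/2`.
Since the auxiliary registers are not exchanged,
`⟨SΨ, Ψ⟩ = ∑_{j,l} D⁰_j D⁰_l D¹_l D¹_j ⟨φ⁰_l, φ⁰_j⟩ ⟨φ¹_j, φ¹_l⟩`, and orthonormality kills every
term with `j ≠ l`, leaving `∑_j (D⁰_j)² (D¹_j)²` rather than `⟨D⁰, D¹⟩²`.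
-/

open Finset ComplexConjugate

variable {ι κ : Type*} [Fintype ι] [Fintype κ]

def boeState (D : ι → ℝ) (φ : ι → κ → ℂ) (j : ι) (x : κ) : ℂ := D j * φ j x

theorem norm_sq_half_mul_add (z w : ℂ) :
    ‖(1 / 2 : ℂ) * (z + w)‖ ^ 2 = (‖z‖ ^ 2 + ‖w‖ ^ 2) / 4 + (z * conj w).re / 2 := by
  simp only [norm_mul, mul_pow, Complex.sq_norm, Complex.normSq_add]
  norm_num
  ring

theorem sum_norm_sq_eq_one_of_sum_conj_mul_self {v : κ → ℂ}
    (hv : ∑ x, conj (v x) * v x = 1) : ∑ x, ‖v x‖ ^ 2 = 1 := by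
  have h : ((∑ x, ‖v x‖ ^ 2 : ℝ) : ℂ) = 1 := by
    push_cast
    simpa only [Complex.conj_mul'] using hv
  exact_mod_cast h

theorem sum_norm_sq_boeState (D : ι → ℝ) (φ : ι → κ → ℂ) (hφ : ∀ j, ∑ x, ‖φ j x‖ ^ 2 = 1) :
    ∑ j, ∑ x, ‖boeState D φ j x‖ ^ 2 = ∑ j, D j ^ 2 := by
  simp only [boeState, norm_mul, mul_pow, ← mul_sum, hφ, Complex.norm_real, Real.norm_eq_abs,
    sq_abs, mul_one]

theorem sum_norm_sq_mul (ψ ψ' : ι → κ → ℂ) :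
    ∑ j, ∑ x, ∑ l, ∑ y, ‖ψ j x * ψ' l y‖ ^ 2 =
      (∑ j, ∑ x, ‖ψ j x‖ ^ 2) * ∑ l, ∑ y, ‖ψ' l y‖ ^ 2 := by
  simp only [norm_mul, mul_pow, ← mul_sum, sum_mul]

theorem sum_norm_sq_mul_swap (ψ ψ' : ι → κ → ℂ) :
    ∑ j, ∑ x, ∑ l, ∑ y, ‖ψ l x * ψ' j y‖ ^ 2 =
      (∑ j, ∑ x, ‖ψ j x‖ ^ 2) * ∑ l, ∑ y, ‖ψ' l y‖ ^ 2 := by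
  simp only [norm_mul, mul_pow, ← sum_mul, ← mul_sum]
  rw [sum_comm]

theorem sum_boeState_mul_conj_swap [DecidableEq ι] (D0 D1 : ι → ℝ) (φ0 φ1 : ι → κ → ℂ)
    (horth0 : ∀ i j, ∑ x, conj (φ0 i x) * φ0 j x = if i = j then 1 else 0)
    (horth1 : ∀ i j, ∑ x, conj (φ1 i x) * φ1 j x = if i = j then 1 else 0) :
    ∑ j, ∑ x, ∑ l, ∑ y, boeState D0 φ0 j x * boeState D1 φ1 l y *
      conj (boeState D0 φ0 l x * boeState D1 φ1 j y) = ∑ j, ((D0 j ^ 2 * D1 j ^ 2 : ℝ) : ℂ) := by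
  have hterm : ∀ j x l y, boeState D0 φ0 j x * boeState D1 φ1 l y *
      conj (boeState D0 φ0 l x * boeState D1 φ1 j y) =
      (D0 j * D0 l * D1 l * D1 j : ℝ) * (conj (φ0 l x) * φ0 j x) * (conj (φ1 j y) * φ1 l y) := by
    intro j x l y
    simp only [boeState, map_mul, Complex.conj_ofReal]
    push_cast
    ring
  simp only [hterm, ← mul_sum, horth1]
  simp only [mul_ite, mul_one, mul_zero, sum_ite_eq, mem_univ, if_true, ← mul_sum, horth0]
  exact sum_congr rfl fun j _ => congrArg _ (by ring)

/-- Swap test in the Bidirectional Orthogonal Encoding (Prop. `swap-bidir`,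
part 1): for unit vectors `D⁰, D¹` encoded as `∑ j D_j |j⟩|φ_j⟩` with
orthonormal auxiliary families, swapping only the primary registers gives
ancilla outcome `|0⟩` with probability `1/2 + (1/2) ∑_j (D⁰_j)² (D¹_j)²`. -/
theorem boe_swap_test_probability
    (N M : ℕ) (D0 D1 : Fin N → ℝ)
    (hD0 : ∑ j, (D0 j) ^ 2 = 1) (hD1 : ∑ j, (D1 j) ^ 2 = 1)
    (φ0 φ1 : Fin N → Fin M → ℂ)
    (horth0 : ∀ i j, ∑ x, (starRingEnd ℂ) (φ0 i x) * φ0 j x =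
      if i = j then 1 else 0)
    (horth1 : ∀ i j, ∑ x, (starRingEnd ℂ) (φ1 i x) * φ1 j x =
      if i = j then 1 else 0) :
    ∑ j, ∑ x, ∑ l, ∑ y,
      ‖(1 / 2 : ℂ) * ((D0 j : ℂ) * φ0 j x * (D1 l : ℂ) * φ1 l y
        + (D0 l : ℂ) * φ0 l x * (D1 j : ℂ) * φ1 j y)‖ ^ 2 =
      1 / 2 + 1 / 2 * ∑ j, (D0 j) ^ 2 * (D1 j) ^ 2 := by
  set ψ0 := boeState D0 φ0
  set ψ1 := boeState D1 φ1
  have hamp : ∀ j x l y, (D0 j : ℂ) * φ0 j x * (D1 l : ℂ) * φ1 l y = ψ0 j x * ψ1 l y :=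
    fun _ _ _ _ => by simp only [ψ0, ψ1, boeState, mul_assoc]
  have hψ0 : ∑ j, ∑ x, ‖ψ0 j x‖ ^ 2 = 1 := by
    rw [sum_norm_sq_boeState _ _ fun j => sum_norm_sq_eq_one_of_sum_conj_mul_self
      (by simpa using horth0 j j), hD0]
  have hψ1 : ∑ j, ∑ x, ‖ψ1 j x‖ ^ 2 = 1 := by
    rw [sum_norm_sq_boeState _ _ fun j => sum_norm_sq_eq_one_of_sum_conj_mul_self
      (by simpa using horth1 j j), hD1]
  calc _ = ∑ j, ∑ x, ∑ l, ∑ y, ((‖ψ0 j x * ψ1 l y‖ ^ 2 + ‖ψ0 l x * ψ1 j y‖ ^ 2) / 4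
          + (ψ0 j x * ψ1 l y * conj (ψ0 l x * ψ1 j y)).re / 2) := by
        simp only [hamp, norm_sq_half_mul_add]
    _ = (1 * 1 + 1 * 1) / 4
          + (∑ j, ∑ x, ∑ l, ∑ y, ψ0 j x * ψ1 l y * conj (ψ0 l x * ψ1 j y)).re / 2 := by
        simp only [sum_add_distrib, ← sum_div, ← Complex.re_sum, sum_norm_sq_mul,
          sum_norm_sq_mul_swap, hψ0, hψ1]
    _ = _ := by
        rw [sum_boeState_mul_conj_swap D0 D1 φ0 φ1 horth0 horth1, ← Complex.ofReal_sum,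
          Complex.ofReal_re]
        ring
end

section
/- Let T̃ : Fin N → ℝ be a unit vector and k ≥ 1, and suppose the state ∑_j T̃_j |j⟩|φ_j⟩ with orthonormal {|φ_j⟩} is given. Applying the QHP (controlled-NOT elementwise product with post-selection on |0…0⟩ in a second primary register) k−1 times to k copies of the primary register of this state yields, conditioned on success, the state ã_k·∑_j (T̃_j)^k |j⟩|φ_j⟩ where ã_k = (∑_j (T̃_j)^(2k))^(−1/2), and the orthonormality of the auxiliary family is preserved; the overall success probability is ã_k^(−2) for k = 2 (single QHP). -/
open Finset

/-!
Over `(ZMod 2)ⁿ` every string is its own negative, so post-selecting the second register on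
`0` forces `l = j` and leaves the amplitude `T̃_j · T̃_j = T̃_j²` on `|j⟩|φ_j⟩`. Since the `φ_j`
are unit vectors, the squared norm of `∑_j w_j |j⟩|φ_j⟩` is `∑_j w_j²`, which for `w_j = T̃_j²`
is `∑_j T̃_j⁴ = ã₂⁻²`; this is positive because `T̃ ≠ 0`.
-/

open ComplexConjugate

lemma zero_sub_eq_self_of_zmod_two {ι : Type*} (j : ι → ZMod 2) : 0 - j = j := by
  funext i
  simp [ZMod.neg_eq_self_mod_two]

lemma Complex.sum_conj_mul_self {ι : Type*} (s : Finset ι) (f : ι → ℂ) :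
    ∑ x ∈ s, conj (f x) * f x = ((∑ x ∈ s, ‖f x‖ ^ 2 : ℝ) : ℂ) := by
  push_cast
  exact sum_congr rfl fun x _ => Complex.conj_mul' (f x)

lemma sum_norm_sq_eq_one_of_orthonormal {J ι : Type*} [DecidableEq J] [Fintype ι] {φ : J → ι → ℂ}
    (horth : ∀ i j, ∑ x, conj (φ i x) * φ j x = if i = j then 1 else 0) (j : J) :
    ∑ x, ‖φ j x‖ ^ 2 = 1 := by
  have h := horth j j
  rw [if_pos rfl, Complex.sum_conj_mul_self] at h
  exact_mod_cast h

lemma sum_norm_ofReal_mul_sq {ι : Type*} (s : Finset ι) (c : ℝ) (f : ι → ℂ) :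
    ∑ x ∈ s, ‖(c : ℂ) * f x‖ ^ 2 = c ^ 2 * ∑ x ∈ s, ‖f x‖ ^ 2 := by
  rw [mul_sum]
  refine sum_congr rfl fun x _ => ?_
  rw [norm_mul, mul_pow, Complex.norm_real, Real.norm_eq_abs, sq_abs]

lemma sum_sum_norm_ofReal_mul_sq {J ι : Type*} [Fintype J] [Fintype ι] (w : J → ℝ)
    {φ : J → ι → ℂ} (hφ : ∀ j, ∑ x, ‖φ j x‖ ^ 2 = 1) :
    ∑ j, ∑ x, ‖(w j : ℂ) * φ j x‖ ^ 2 = ∑ j, w j ^ 2 :=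
  sum_congr rfl fun j _ => by rw [sum_norm_ofReal_mul_sq, hφ, mul_one]

lemma sum_pow_two_mul_pos {J : Type*} [Fintype J] {T : J → ℝ} (hT : ∑ j, T j ^ 2 ≠ 0)
    (k : ℕ) : 0 < ∑ j, T j ^ (2 * k) := by
  obtain ⟨j, -, hj⟩ := exists_ne_zero_of_sum_ne_zero hT
  have hTj : T j ≠ 0 := fun h => hj (by simp [h])
  refine sum_pos' (fun i _ => by rw [pow_mul]; positivity) ⟨j, mem_univ j, ?_⟩
  rw [pow_mul]
  exact pow_pos (by positivity) k

lemma Real.rpow_neg_half_sq {S : ℝ} (hS : 0 ≤ S) : (S ^ (-(1 / 2 : ℝ))) ^ 2 = S⁻¹ := by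
  rw [← Real.rpow_natCast, ← Real.rpow_mul hS]
  norm_num
  exact Real.rpow_neg_one S

/-- QHP on a BOE state (Eq. `psiTpower-bidir`, case `k = 2`): for a unit
vector `T̃` indexed by `n`-bit strings and a BOE state `∑_j T̃_j |j⟩|φ_j⟩`
with orthonormal auxiliaries, the transversal-CNOT QHP `|j⟩|l⟩ ↦ |j⟩|l ⊕ j⟩`
applied to two copies, post-selected on `|0…0⟩` in the second primary
register, leaves the unnormalized amplitude `T̃_j² φ_j(x)`; the success
probability is `ã₂⁻²`, the conditioned state is `ã₂ ∑_j T̃_j² |j⟩|φ_j⟩`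
(a unit vector), and the orthonormality of the auxiliary family is
preserved. -/
theorem boe_qhp_square
    (n M : ℕ) (T : (Fin n → ZMod 2) → ℝ) (hT : ∑ j, (T j) ^ 2 = 1)
    (φ : (Fin n → ZMod 2) → Fin M → ℂ)
    (horth : ∀ i j, ∑ x, (starRingEnd ℂ) (φ i x) * φ j x =
      if i = j then 1 else 0)
    (a2 : ℝ) (ha2 : a2 = (∑ j, (T j) ^ (2 * 2)) ^ (-(1 / 2 : ℝ)))
    -- `ψ` is the amplitude remaining after the CNOTs `|j⟩|l⟩ ↦ |j⟩|l + j⟩`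
    -- and projection of the second primary register onto `0`:
    (ψ : (Fin n → ZMod 2) → Fin M → ℂ)
    (hψ : ∀ j x, ψ j x = (T j : ℂ) * φ j x * (T (0 - j) : ℂ)) :
    (∀ j x, ψ j x = ((T j ^ 2 : ℝ) : ℂ) * φ j x) ∧
    (∑ j, ∑ x, ‖ψ j x‖ ^ 2 = (a2 ^ 2)⁻¹) ∧
    (∑ j, ∑ x, ‖((a2 : ℝ) : ℂ) * ψ j x‖ ^ 2 = 1) ∧
    (∀ i j, ∑ x, (starRingEnd ℂ) (φ i x) * φ j x = if i = j then 1 else 0) := by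
  have hsq : ∀ j x, ψ j x = ((T j ^ 2 : ℝ) : ℂ) * φ j x := fun j x => by
    rw [hψ, zero_sub_eq_self_of_zmod_two]
    push_cast
    ring
  have hS : 0 < ∑ j, T j ^ (2 * 2) := sum_pow_two_mul_pos (by rw [hT]; exact one_ne_zero) 2
  have hnorm : ∑ j, ∑ x, ‖ψ j x‖ ^ 2 = ∑ j, T j ^ (2 * 2) := by
    simp_rw [hsq, pow_mul]
    exact sum_sum_norm_ofReal_mul_sq _ (sum_norm_sq_eq_one_of_orthonormal horth)
  have ha2sq : a2 ^ 2 = (∑ j, T j ^ (2 * 2))⁻¹ := by rw [ha2, Real.rpow_neg_half_sq hS.le]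
  refine ⟨hsq, by rw [hnorm, ha2sq, inv_inv], ?_, horth⟩
  simp_rw [sum_norm_ofReal_mul_sq]
  rw [← mul_sum, hnorm, ha2sq, inv_mul_cancel₀ hS.ne']
end
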